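/- Let E be a directed graph with no heads, G⁰ ⊆ E⁰ containing all singular vertices, and T the complementary subgraph (T⁰ = E⁰ \ G⁰, T¹ = edges with both endpoints in T⁰) assumed acyclic. Prove: if v ∈ T⁰ and the set B_v (of paths ending at v, starting in G⁰, with all intermediate sources in T⁰) is infinite, then there exists an infinite path y ∈ T^∞ (all edges in T¹) with r(y) = v. -/

import Mathlib

/-- `β ∈ B_v`: a finite path of length at least `1` with range `v`, source in `G⁰`, and all
intermediate sources in `T⁰ = E⁰ \ G⁰`. -/
def InB {V E : Type*} (r s : E → V) (G0 : Set V) (v : V) (β : List E) : Prop :=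
  β ≠ [] ∧ β.Chain' (fun e f => s e = r f) ∧
  (∀ h : 0 < β.length, r (β.get ⟨0, h⟩) = v) ∧
  (∀ (i : ℕ) (h : i < β.length),
    (i = β.length - 1 → s (β.get ⟨i, h⟩) ∈ G0) ∧
    (i < β.length - 1 → s (β.get ⟨i, h⟩) ∉ G0))

/-- A cycle: a nonempty composable list of edges whose source equals its range and whose
edges have pairwise distinct sources. -/
def IsCycleList {V E : Type*} (r s : E → V) (α : List E) : Prop :=
  α ≠ [] ∧ α.Chain' (fun e f => s e = r f) ∧
  (∀ h : α ≠ [], s (α.getLast h) = r (α.head h)) ∧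
  (∀ i j : Fin α.length, i ≠ j → s (α.get i) ≠ s (α.get j))

/-- A head: an infinite path `x₁x₂…` which is acyclic, and such that every vertex
`r(xᵢ)` receives only the edge `xᵢ` and every `s(xᵢ)` emits only `xᵢ`. -/
def IsHead {V E : Type*} (r s : E → V) (x : ℕ → E) : Prop :=
  (∀ i : ℕ, s (x i) = r (x (i + 1))) ∧
  (¬ ∃ i j : ℕ, i ≤ j ∧ s (x j) = r (x i) ∧
    ∀ a b : ℕ, i ≤ a → a < b → b ≤ j → s (x a) ≠ s (x b)) ∧
  (∀ i : ℕ, ∀ e : E, r e = r (x i) → e = x i) ∧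
  (∀ i : ℕ, ∀ e : E, s e = s (x i) → e = x i)

/-!
Vertices of `T⁰` receive only finitely many edges, so if `B_u` is infinite for some `u ∈ T⁰`,
the pigeonhole principle gives an edge `e` into `u` that begins infinitely many paths of `B_u`
of length at least two. Then `s e ∈ T⁰`, and `B_{s e}` is infinite as it contains their tails.
Iterating this step from `v`, as in König's lemma, yields the infinite path in `T`.
-/

section InB

variable {V E : Type*} {r s : E → V} {G0 : Set V} {u : V}

theorem InB.exists_eq_cons {β : List E} (h : InB r s G0 u β) :
    ∃ e γ, β = e :: γ ∧ r e = u := by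
  rcases β with _ | ⟨e, γ⟩
  · exact absurd rfl h.1
  · exact ⟨e, γ, rfl, h.2.2.1 (Nat.succ_pos _)⟩

theorem InB.of_cons {e : E} {γ : List E} (h : InB r s G0 u (e :: γ)) (hγ : γ ≠ []) :
    s e ∉ G0 ∧ InB r s G0 (s e) γ := by
  obtain ⟨-, hchain, -, hsrc⟩ := h
  have hlen : 0 < γ.length := List.length_pos_iff.mpr hγ
  refine ⟨(hsrc 0 (Nat.succ_pos _)).2 (by simpa using hlen), hγ, hchain.tail, ?_, ?_⟩
  · intro _
    rcases γ with _ | ⟨f, γ⟩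
    · exact absurd rfl hγ
    · exact ((List.isChain_cons_cons.mp hchain).1).symm
  · intro i hi
    have := hsrc (i + 1) (Nat.succ_lt_succ hi)
    exact ⟨fun heq => this.1 (by simp only [List.length_cons]; omega), fun hlt => this.2 (by simp only [List.length_cons]; omega)⟩

theorem exists_edge_infinite_InB (hfin : {e : E | r e = u}.Finite) (hinf : {β | InB r s G0 u β}.Infinite) :
    ∃ e, r e = u ∧ s e ∉ G0 ∧ {γ | InB r s G0 (s e) γ}.Infinite := by
  set C : E → Set (List E) := fun e => {γ | γ ≠ [] ∧ InB r s G0 u (e :: γ)}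
  have cover : {β | InB r s G0 u β} ⊆ ⋃ e ∈ {e : E | r e = u}, insert [e] ((e :: ·) '' C e) := by
    intro β hβ
    obtain ⟨e, γ, rfl, he⟩ := hβ.exists_eq_cons
    refine Set.mem_biUnion he ?_
    rcases eq_or_ne γ [] with rfl | hγ
    · exact Set.mem_insert _ _
    · exact Or.inr ⟨γ, ⟨hγ, hβ⟩, rfl⟩
  obtain ⟨e, he, hC⟩ : ∃ e, r e = u ∧ (C e).Infinite := by
    by_contra! h
    exact hinf ((hfin.biUnion fun e he => ((h e he).image _).insert _).subset cover)
  obtain ⟨γ, hγ, hβ⟩ := hC.nonempty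
  exact ⟨e, he, (hβ.of_cons hγ).1, hC.mono fun γ hγ => (hγ.2.of_cons hγ.1).2⟩

end InB

theorem exists_path_of_forall_exists_edge {V E : Type*} (r s : E → V) (P : V → Prop)
    (hstep : ∀ u, P u → ∃ e, r e = u ∧ P (s e)) {v : V} (hv : P v) :
    ∃ y : ℕ → E, (∀ i, s (y i) = r (y (i + 1))) ∧ (∀ i, P (r (y i)) ∧ P (s (y i))) ∧
      r (y 0) = v := by
  choose g hgr hgs using fun u : Subtype P => hstep u.1 u.2
  let w : ℕ → Subtype P := fun n => Nat.rec ⟨v, hv⟩ (fun _ u => ⟨s (g u), hgs u⟩) n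
  refine ⟨fun n => g (w n), fun n => (hgr (w (n + 1))).symm, fun n => ⟨?_, hgs (w n)⟩,
    hgr (w 0)⟩
  exact (hgr (w n)).symm ▸ (w n).2

theorem stmt10_general {V E : Type*} (r s : E → V) (G0 : Set V)
    (hsing : ∀ u : V, ({e : E | r e = u} = ∅ ∨ {e : E | r e = u}.Infinite) → u ∈ G0)
    (v : V) (hv : v ∉ G0)
    (hBv : {β : List E | InB r s G0 v β}.Infinite) :
    ∃ y : ℕ → E, (∀ i : ℕ, s (y i) = r (y (i + 1))) ∧
      (∀ i : ℕ, r (y i) ∉ G0 ∧ s (y i) ∉ G0) ∧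
      r (y 0) = v := by
  have hstep : ∀ u, u ∉ G0 ∧ {β | InB r s G0 u β}.Infinite →
      ∃ e, r e = u ∧ s e ∉ G0 ∧ {γ | InB r s G0 (s e) γ}.Infinite := fun u ⟨hu, hinf⟩ =>
    exists_edge_infinite_InB (Set.not_infinite.mp fun h => hu (hsing u (Or.inr h))) hinf
  obtain ⟨y, hchain, hT, hy0⟩ := exists_path_of_forall_exists_edge r s _ hstep ⟨hv, hBv⟩
  exact ⟨y, hchain, fun i => ⟨(hT i).1.1, (hT i).2.1⟩, hy0⟩

/-- Let `E` be a countable directed graph with no heads, let `G⁰ ⊆ E⁰` contain all singular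
vertices, and suppose the complementary subgraph `T` is acyclic.  If `v ∈ T⁰` and `B_v` is
infinite, then there is an infinite path `y` with all edges in `T¹` and `r(y) = v`. -/
theorem stmt10 {V E : Type*} [Countable V] [Countable E] (r s : E → V) (G0 : Set V)
    (hsing : ∀ u : V, ({e : E | r e = u} = ∅ ∨ {e : E | r e = u}.Infinite) → u ∈ G0)
    (hnohead : ¬ ∃ x : ℕ → E, IsHead r s x)
    (hTacyclic : ¬ ∃ α : List E,
      (∀ e ∈ α, r e ∉ G0 ∧ s e ∉ G0) ∧ IsCycleList r s α)
    (v : V) (hv : v ∉ G0)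
    (hBv : {β : List E | InB r s G0 v β}.Infinite) :
    ∃ y : ℕ → E, (∀ i : ℕ, s (y i) = r (y (i + 1))) ∧
      (∀ i : ℕ, r (y i) ∉ G0 ∧ s (y i) ∉ G0) ∧
      r (y 0) = v :=
  stmt10_general r s G0 hsing v hv hBv
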